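/- Let H be Hermitian, A an operator with operator norm ‖A‖_∞, ρ an operator with trace norm ‖ρ‖₁ = 1, and define f(U) = Tr(A e^{-itUHU†} ρ e^{itUHU†}) for unitary U and fixed t ∈ ℝ. Then for any unitaries U, V: |f(U) − f(V)| ≤ 4‖A‖_∞ ‖U − V‖_∞. -/

import Mathlib

open scoped ComplexOrder
open Matrix

/-- The operator (spectral) norm of a complex matrix. -/
noncomputable def opNorm {d : ℕ} (A : Matrix (Fin d) (Fin d) ℂ) : ℝ :=
  ‖(Matrix.toEuclideanCLM (𝕜 := ℂ) A : EuclideanSpace ℂ (Fin d) →L[ℂ] EuclideanSpace ℂ (Fin d))‖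

/-- The singular values of a complex matrix: square roots of the eigenvalues of `Aᴴ * A`. -/
noncomputable def singularValues {d : ℕ} (A : Matrix (Fin d) (Fin d) ℂ) : Fin d → ℝ :=
  fun i => Real.sqrt ((Matrix.posSemidef_conjTranspose_mul_self A).1.eigenvalues i)

/-- The trace norm (Schatten 1-norm) of a complex matrix. -/
noncomputable def traceNorm {d : ℕ} (A : Matrix (Fin d) (Fin d) ℂ) : ℝ :=
  ∑ i, singularValues A i

/-- The Schatten `p`-norm of a complex matrix. -/
noncomputable def schattenNorm {d : ℕ} (p : ℝ) (A : Matrix (Fin d) (Fin d) ℂ) : ℝ :=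
  (∑ i, singularValues A i ^ p) ^ (1 / p)

/-!
Write `E = e^{-itH}`, a unitary. Conjugating the exponent conjugates the exponential, so
`f W = Tr(A X ρ X†)` with `X = W E W†`. Since `U E U† - V E V† = (U - V) E U† + V E (U - V)†`,
unitary invariance of the operator norm gives `‖X_U - X_V‖ ≤ 2‖U - V‖`. Similarly
`Tr(A X ρ X†) - Tr(A Y ρ Y†) = Tr(X† A (X - Y) ρ) + Tr((X - Y)† A Y ρ)`, and Hölder's inequality
`|Tr(M R)| ≤ ‖M‖_∞ ‖R‖₁` bounds each term by `‖A‖_∞ ‖X - Y‖_∞ ‖ρ‖₁`.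
-/

open scoped Matrix.Norms.L2Operator

theorem CStarRing.norm_conj_sub_conj_le {E : Type*} [NormedRing E] [StarRing E] [CStarRing E]
    {U V W : E} (hU : U ∈ unitary E) (hV : V ∈ unitary E) (hW : W ∈ unitary E) :
    ‖U * W * star U - V * W * star V‖ ≤ 2 * ‖U - V‖ := by
  have hsplit : U * W * star U - V * W * star V = (U - V) * W * star U + V * W * star (U - V) := by
    rw [star_sub]; noncomm_ring
  calc ‖U * W * star U - V * W * star V‖
      ≤ ‖(U - V) * W * star U‖ + ‖V * W * star (U - V)‖ := hsplit ▸ norm_add_le _ _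
    _ = 2 * ‖U - V‖ := by
      rw [norm_mul_mem_unitary _ (Unitary.star_mem hU), norm_mul_mem_unitary _ hW, mul_assoc,
        norm_mem_unitary_mul _ hV, norm_mem_unitary_mul _ hW, norm_star, two_mul]

theorem Matrix.trace_eq_sum_inner {𝕜 n : Type*} [RCLike 𝕜] [Fintype n] [DecidableEq n]
    (A : Matrix n n 𝕜) (b : OrthonormalBasis n 𝕜 (EuclideanSpace 𝕜 n)) :
    A.trace = ∑ j, inner 𝕜 (b j) (toEuclideanLin A (b j)) := by
  rw [← LinearMap.trace_eq_sum_inner, toEuclideanLin_eq_toLin_orthonormal,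
    LinearMap.trace_eq_matrix_trace 𝕜 (EuclideanSpace.basisFun n 𝕜).toBasis,
    LinearMap.toMatrix_toLin]

section TraceNorm

variable {d : ℕ}

theorem traceNorm_nonneg (R : Matrix (Fin d) (Fin d) ℂ) : 0 ≤ traceNorm R :=
  Finset.sum_nonneg fun _ _ => Real.sqrt_nonneg _

theorem norm_toEuclideanLin_eigenvectorBasis (R : Matrix (Fin d) (Fin d) ℂ) (j : Fin d) :
    ‖toEuclideanLin R ((posSemidef_conjTranspose_mul_self R).1.eigenvectorBasis j)‖
      = singularValues R j := by
  set hB := (posSemidef_conjTranspose_mul_self R).1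
  rw [singularValues, hB.eigenvalues_eq j, ← mulVec_mulVec, dotProduct_mulVec, ← star_mulVec,
    dotProduct_comm, ← EuclideanSpace.inner_eq_star_dotProduct, inner_self_eq_norm_sq,
    Real.sqrt_sq (norm_nonneg _)]
  rfl

theorem norm_trace_mul_le (M R : Matrix (Fin d) (Fin d) ℂ) :
    ‖(M * R).trace‖ ≤ ‖M‖ * traceNorm R := by
  set b := (posSemidef_conjTranspose_mul_self R).1.eigenvectorBasis
  rw [trace_eq_sum_inner _ b, traceNorm, Finset.mul_sum]
  refine (norm_sum_le _ _).trans (Finset.sum_le_sum fun j _ => ?_)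
  calc ‖inner ℂ (b j) (toEuclideanLin (M * R) (b j))‖
      ≤ ‖toEuclideanLin M (toEuclideanLin R (b j))‖ := by
        simpa [b.orthonormal.1 j] using norm_inner_le_norm (𝕜 := ℂ) (b j) _
    _ ≤ ‖M‖ * ‖toEuclideanLin R (b j)‖ := l2_opNorm_mulVec M _
    _ = ‖M‖ * singularValues R j := by rw [norm_toEuclideanLin_eigenvectorBasis]

theorem norm_trace_conj_sub_conj_le (A ρ : Matrix (Fin d) (Fin d) ℂ)
    {X Y : Matrix (Fin d) (Fin d) ℂ} (hX : X ∈ unitaryGroup (Fin d) ℂ)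
    (hY : Y ∈ unitaryGroup (Fin d) ℂ) :
    ‖(A * X * ρ * Xᴴ).trace - (A * Y * ρ * Yᴴ).trace‖ ≤ 2 * ‖A‖ * ‖X - Y‖ * traceNorm ρ := by
  have hcycle (P Q : Matrix (Fin d) (Fin d) ℂ) :
      ‖(P * ρ * Q).trace‖ ≤ ‖Q * P‖ * traceNorm ρ := by
    rw [trace_mul_comm, ← Matrix.mul_assoc]
    exact norm_trace_mul_le _ _
  have hsplit : (A * X * ρ * Xᴴ).trace - (A * Y * ρ * Yᴴ).trace
      = (A * (X - Y) * ρ * Xᴴ).trace + (A * Y * ρ * (X - Y)ᴴ).trace := by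
    rw [← trace_add, ← trace_sub, conjTranspose_sub]; congr 1; noncomm_ring
  have h₁ : ‖Xᴴ * (A * (X - Y))‖ ≤ ‖A‖ * ‖X - Y‖ := by
    rw [← star_eq_conjTranspose, CStarRing.norm_mem_unitary_mul _ (Unitary.star_mem hX)]
    exact norm_mul_le _ _
  have h₂ : ‖(X - Y)ᴴ * (A * Y)‖ ≤ ‖A‖ * ‖X - Y‖ := by
    rw [← Matrix.mul_assoc, CStarRing.norm_mul_mem_unitary _ hY, mul_comm,
      ← l2_opNorm_conjTranspose (X - Y)]
    exact norm_mul_le _ _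
  have hρ := traceNorm_nonneg ρ
  rw [hsplit]
  calc _ ≤ ‖(A * (X - Y) * ρ * Xᴴ).trace‖ + ‖(A * Y * ρ * (X - Y)ᴴ).trace‖ := norm_add_le _ _
    _ ≤ ‖Xᴴ * (A * (X - Y))‖ * traceNorm ρ + ‖(X - Y)ᴴ * (A * Y)‖ * traceNorm ρ :=
        add_le_add (hcycle _ _) (hcycle _ _)
    _ ≤ ‖A‖ * ‖X - Y‖ * traceNorm ρ + ‖A‖ * ‖X - Y‖ * traceNorm ρ := by gcongr
    _ = 2 * ‖A‖ * ‖X - Y‖ * traceNorm ρ := by ring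

end TraceNorm

section Exp

variable {𝕜 n : Type*} [RCLike 𝕜] [Fintype n] [DecidableEq n]

theorem Matrix.exp_mem_unitaryGroup_of_mem_skewAdjoint {K : Matrix n n 𝕜}
    (hK : K ∈ skewAdjoint (Matrix n n 𝕜)) : NormedSpace.exp K ∈ unitaryGroup n 𝕜 := by
  rw [mem_unitaryGroup_iff', star_eq_conjTranspose, ← exp_conjTranspose, ← star_eq_conjTranspose,
    skewAdjoint.mem_iff.mp hK, ← exp_add_of_commute _ _ (Commute.refl K).neg_left,
    neg_add_cancel, NormedSpace.exp_zero]

theorem Matrix.exp_unitary_conj {P : Matrix n n 𝕜} (hP : P ∈ unitaryGroup n 𝕜)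
    (K : Matrix n n 𝕜) : NormedSpace.exp (P * K * Pᴴ) = P * NormedSpace.exp K * Pᴴ := by
  simpa [star_eq_conjTranspose] using exp_units_conj (Unitary.toUnits ⟨P, hP⟩) K

end Exp

/-- For Hermitian `H`, an operator `A`, a state `ρ` with `‖ρ‖₁ = 1`, fixed `t ∈ ℝ`,
and `f(U) = Tr(A e^{-itUHU†} ρ e^{itUHU†})`, any unitaries `U, V` satisfy
`|f(U) − f(V)| ≤ 4‖A‖_∞ ‖U − V‖_∞`. -/
theorem stmt_6 {d : ℕ} (H A ρ : Matrix (Fin d) (Fin d) ℂ) (hH : H.IsHermitian)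
    (hρ : traceNorm ρ = 1) (t : ℝ)
    (f : Matrix (Fin d) (Fin d) ℂ → ℂ)
    (hf : ∀ W : Matrix (Fin d) (Fin d) ℂ,
      f W = (A * NormedSpace.exp ((-(t * Complex.I)) • (W * H * Wᴴ)) * ρ *
        NormedSpace.exp ((t * Complex.I) • (W * H * Wᴴ))).trace)
    (U V : Matrix (Fin d) (Fin d) ℂ)
    (hU : U ∈ Matrix.unitaryGroup (Fin d) ℂ) (hV : V ∈ Matrix.unitaryGroup (Fin d) ℂ) :
    ‖f U - f V‖ ≤ 4 * opNorm A * opNorm (U - V) := by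
  set E := NormedSpace.exp ((-(t * Complex.I)) • H)
  have hskew : (-(t * Complex.I)) • H ∈ skewAdjoint (Matrix (Fin d) (Fin d) ℂ) :=
    hH.isSelfAdjoint.smul_mem_skewAdjoint (by simp [skewAdjoint.mem_iff, Complex.conj_ofReal])
  have hE : E ∈ unitaryGroup (Fin d) ℂ := exp_mem_unitaryGroup_of_mem_skewAdjoint hskew
  have hE_conjTranspose : NormedSpace.exp ((t * Complex.I) • H) = Eᴴ := by
    rw [← exp_conjTranspose, ← star_eq_conjTranspose, skewAdjoint.mem_iff.mp hskew, neg_smul,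
      neg_neg]
  have hf_conj (W : Matrix (Fin d) (Fin d) ℂ) (hW : W ∈ unitaryGroup (Fin d) ℂ) :
      f W = (A * (W * E * Wᴴ) * ρ * (W * E * Wᴴ)ᴴ).trace := by
    have hexp (z : ℂ) :
        NormedSpace.exp (z • (W * H * Wᴴ)) = W * NormedSpace.exp (z • H) * Wᴴ := by
      rw [← exp_unitary_conj hW, Matrix.mul_smul, Matrix.smul_mul]
    rw [hf, hexp, hexp, hE_conjTranspose]
    simp only [conjTranspose_mul, conjTranspose_conjTranspose, Matrix.mul_assoc, E]
  have hconj (W : Matrix (Fin d) (Fin d) ℂ) (hW : W ∈ unitaryGroup (Fin d) ℂ) :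
      W * E * Wᴴ ∈ unitaryGroup (Fin d) ℂ :=
    mul_mem (mul_mem hW hE) (Unitary.star_mem hW)
  calc ‖f U - f V‖ ≤ 2 * ‖A‖ * ‖U * E * Uᴴ - V * E * Vᴴ‖ * traceNorm ρ := by
        rw [hf_conj U hU, hf_conj V hV]
        exact norm_trace_conj_sub_conj_le A ρ (hconj U hU) (hconj V hV)
    _ ≤ 2 * ‖A‖ * (2 * ‖U - V‖) * 1 := by
        rw [← hρ]; gcongr; exact CStarRing.norm_conj_sub_conj_le hU hV hE
    _ = 4 * ‖A‖ * ‖U - V‖ := by ring
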